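/- arXiv:math/0511218 — 9 statements merged into one kernel-verified Lean document; each statement's English description precedes it below -/
import Mathlib

section
/- Let E be a topological vector space over a non-discrete topological field K, and let U ⊆ E be a subset whose interior U⁰ is dense in U. If W ⊆ U is dense in U and open in E, then the set W^{]1[} := {(x,y,t) ∈ W × E × Kˣ : x + t·y ∈ W} is open in E × E × K and dense in U^{[1]} := {(x,y,t) ∈ U × E × K : x + t·y ∈ U}. -/
/-!
For `t ≠ 0` the map `(a, b) ↦ (a, t⁻¹ • (b - a), t)` is continuous, sends `W × W` into
`W^{]1[}` and `(x, x + t • y)` to `(x, y, t)`, so density of `W` gives density of `W^{]1[}` there.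
For `t = 0` and `a ∈ W`, openness of `W` puts `(a, y, s)` in `W^{]1[}` for all small `s ≠ 0`,
and non-discreteness of `K` lets `s` tend to `0`; then let `a` tend to `x`.
-/

open Topology Filter Set

section

variable (K : Type*) {E : Type*} [Field K] [TopologicalSpace K]
  [AddCommGroup E] [Module K E] [TopologicalSpace E]

/-- `W^{]1[}`: the triples on which the difference quotient `(f (x + t • y) - f x) / t` of a map
defined on `W` makes sense. -/
def secantDomain (W : Set E) : Set (E × E × K) :=
  {p | p.1 ∈ W ∧ p.2.2 ≠ 0 ∧ p.1 + p.2.2 • p.2.1 ∈ W}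

variable {K} [IsTopologicalAddGroup E] [ContinuousSMul K E] {W : Set E}

theorem isOpen_secantDomain [T1Space K] (hW : IsOpen W) : IsOpen (secantDomain K W) :=
  (hW.preimage continuous_fst).inter <|
    (isOpen_compl_singleton.preimage (by fun_prop)).inter (hW.preimage (by fun_prop))

theorem mk_mem_closure_secantDomain {x y : E} {t : K} (ht : t ≠ 0) (hx : x ∈ closure W)
    (hz : x + t • y ∈ closure W) : (x, y, t) ∈ closure (secantDomain K W) := by
  have hmaps : MapsTo (fun p : E × E => (p.1, t⁻¹ • (p.2 - p.1), t)) (W ×ˢ W)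
      (secantDomain K W) := fun p hp => ⟨hp.1, ht, by simpa [smul_inv_smul₀ ht] using hp.2⟩
  have hxz : (x, x + t • y) ∈ closure (W ×ˢ W) := by
    rw [closure_prod_eq]
    exact ⟨hx, hz⟩
  simpa [inv_smul_smul₀ ht] using map_mem_closure (by fun_prop) hxz hmaps

theorem mk_zero_mem_closure_secantDomain (hK : (𝓝[≠] (0 : K)).NeBot) (hW : IsOpen W) {x : E}
    (hx : x ∈ closure W) (y : E) : (x, y, (0 : K)) ∈ closure (secantDomain K W) := by
  have hmaps : MapsTo (fun a : E => (a, y, (0 : K))) W (closure (secantDomain K W)) := by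
    intro a ha
    have hline : ∀ᶠ s in 𝓝 (0 : K), a + s • y ∈ W :=
      (by fun_prop : Continuous fun s : K => a + s • y).continuousAt.preimage_mem_nhds
        (by simpa using hW.mem_nhds ha)
    have hlim : Tendsto (fun s : K => (a, y, s)) (𝓝[≠] 0) (𝓝 (a, y, 0)) :=
      tendsto_nhdsWithin_of_tendsto_nhds <|
        (by fun_prop : Continuous fun s : K => (a, y, s)).tendsto 0
    refine mem_closure_of_tendsto hlim ?_
    filter_upwards [self_mem_nhdsWithin, nhdsWithin_le_nhds hline] with s hs hsW
    exact ⟨ha, hs, hsW⟩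
  simpa using map_mem_closure (by fun_prop) hx hmaps

theorem subset_closure_secantDomain (hK : (𝓝[≠] (0 : K)).NeBot) (hW : IsOpen W) :
    {p : E × E × K | p.1 ∈ closure W ∧ p.1 + p.2.2 • p.2.1 ∈ closure W} ⊆
      closure (secantDomain K W) := by
  rintro ⟨x, y, t⟩ ⟨hx, hz⟩
  rcases eq_or_ne t 0 with rfl | ht
  · exact mk_zero_mem_closure_secantDomain hK hW hx y
  · exact mk_mem_closure_secantDomain ht hx hz

end

theorem stmt0_general {K E : Type*} [Field K] [TopologicalSpace K] [T2Space K]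
    [AddCommGroup E] [Module K E] [TopologicalSpace E] [IsTopologicalAddGroup E]
    [ContinuousSMul K E]
    (hK : (nhdsWithin (0 : K) {t : K | t ≠ 0}).NeBot)
    (U W : Set E) (hWopen : IsOpen W) (hWdense : U ⊆ closure W) :
    IsOpen {p : E × E × K | p.1 ∈ W ∧ p.2.2 ≠ 0 ∧ p.1 + p.2.2 • p.2.1 ∈ W} ∧
    {p : E × E × K | p.1 ∈ U ∧ p.1 + p.2.2 • p.2.1 ∈ U} ⊆
      closure {p : E × E × K | p.1 ∈ W ∧ p.2.2 ≠ 0 ∧ p.1 + p.2.2 • p.2.1 ∈ W} :=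
  ⟨isOpen_secantDomain hWopen, fun _ hp =>
    subset_closure_secantDomain hK hWopen ⟨hWdense hp.1, hWdense hp.2⟩⟩

/-- For `U ⊆ E` with dense interior and `W ⊆ U` dense in `U` and open in `E`,
the set `W^{]1[}` is open in `E × E × K` and dense in `U^{[1]}`. -/
theorem stmt0 {K E : Type*} [Field K] [TopologicalSpace K] [IsTopologicalRing K] [T2Space K]
    [AddCommGroup E] [Module K E] [TopologicalSpace E] [IsTopologicalAddGroup E]
    [ContinuousSMul K E] [T2Space E]
    (hK : (nhdsWithin (0 : K) {t : K | t ≠ 0}).NeBot)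
    (U W : Set E) (hUdense : U ⊆ closure (interior U))
    (hWU : W ⊆ U) (hWopen : IsOpen W) (hWdense : U ⊆ closure W) :
    IsOpen {p : E × E × K | p.1 ∈ W ∧ p.2.2 ≠ 0 ∧ p.1 + p.2.2 • p.2.1 ∈ W} ∧
    {p : E × E × K | p.1 ∈ U ∧ p.1 + p.2.2 • p.2.1 ∈ U} ⊆
      closure {p : E × E × K | p.1 ∈ W ∧ p.2.2 ≠ 0 ∧ p.1 + p.2.2 • p.2.1 ∈ W} :=
  stmt0_general hK U W hWopen hWdense
end

section
/- Let f : U → F be a C¹-map between subsets of topological K-vector spaces (U with dense interior). If t ∈ Kˣ and (x, y, ts) ∈ U^{[1]}, then (x, ty, s) ∈ U^{[1]} and t · f^{[1]}(x, y, ts) = f^{[1]}(x, ty, s). -/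
/-!
Away from `s = 0` both sides are honest difference quotients of `f` between the same two points
`x` and `x + (t * s) • y`, and the identity is `t • (t * s)⁻¹ = s⁻¹`. At `s = 0` both sides are
values of `f^[1](x, ·, 0)`, and the identity is its homogeneity.
-/

section ScaledDifferenceQuotient

variable {K E F : Type*} [Field K] [AddCommGroup E] [Module K E] [AddCommGroup F] [Module K F]

lemma add_smul_smul_eq_add_mul_smul (x y : E) (t s : K) : x + s • (t • y) = x + (t * s) • y := by
  rw [smul_smul, mul_comm]

lemma smul_mul_inv_smul {t : K} (ht : t ≠ 0) (s : K) (v : F) : t • (t * s)⁻¹ • v = s⁻¹ • v := by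
  rw [smul_smul, mul_inv, ← mul_assoc, mul_inv_cancel₀ ht, one_mul]

variable {U : Set E} {f : E → F} {f1 : E × E × K → F}

lemma diffQuot_smul_of_ne_zero
    (hdq : ∀ (x y : E) (t : K), t ≠ 0 → x ∈ U → x + t • y ∈ U →
      f1 (x, y, t) = t⁻¹ • (f (x + t • y) - f x))
    {x y : E} {t s : K} (ht : t ≠ 0) (hs : s ≠ 0) (hx : x ∈ U) (hxts : x + (t * s) • y ∈ U) :
    t • f1 (x, y, t * s) = f1 (x, t • y, s) := by
  have hxsty : x + s • (t • y) ∈ U := (add_smul_smul_eq_add_mul_smul x y t s).symm ▸ hxts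
  rw [hdq x y (t * s) (mul_ne_zero ht hs) hx hxts, hdq x (t • y) s hs hx hxsty,
    add_smul_smul_eq_add_mul_smul, smul_mul_inv_smul ht]

lemma diffQuot_smul_zero (hlin : ∀ x ∈ U, IsLinearMap K fun y : E => f1 (x, y, 0))
    {x : E} (hx : x ∈ U) (y : E) (t : K) :
    t • f1 (x, y, t * 0) = f1 (x, t • y, 0) := by
  rw [mul_zero, (hlin x hx).map_smul]

end ScaledDifferenceQuotient

theorem stmt2_general {K E F : Type*} [Field K]
    [AddCommGroup E] [Module K E]
    [AddCommGroup F] [Module K F]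
    (U : Set E)
    (f : E → F) (f1 : E × E × K → F)
    (hdq : ∀ (x y : E) (t : K), t ≠ 0 → x ∈ U → x + t • y ∈ U →
      f1 (x, y, t) = t⁻¹ • (f (x + t • y) - f x))
    (hlin : ∀ x ∈ U, IsLinearMap K fun y : E => f1 (x, y, 0)) :
    ∀ (x y : E) (t s : K), t ≠ 0 → x ∈ U → x + (t * s) • y ∈ U →
      (x + s • (t • y) ∈ U ∧ t • f1 (x, y, t * s) = f1 (x, t • y, s)) := by
  intro x y t s ht hx hxts
  refine ⟨(add_smul_smul_eq_add_mul_smul x y t s).symm ▸ hxts, ?_⟩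
  rcases eq_or_ne s 0 with rfl | hs
  · exact diffQuot_smul_zero hlin hx y t
  · exact diffQuot_smul_of_ne_zero hdq ht hs hx hxts

/-- scaling identity for the extended difference quotient of a C¹-map:
if `t ≠ 0` and `(x, y, t*s) ∈ U^[1]`, then `(x, t•y, s) ∈ U^[1]` and
`t • f^[1](x, y, t*s) = f^[1](x, t•y, s)`. -/
theorem stmt2 {K E F : Type*} [Field K] [TopologicalSpace K] [IsTopologicalRing K]
    [AddCommGroup E] [Module K E] [TopologicalSpace E] [IsTopologicalAddGroup E]
    [ContinuousSMul K E]
    [AddCommGroup F] [Module K F] [TopologicalSpace F] [IsTopologicalAddGroup F]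
    [ContinuousSMul K F]
    (U : Set E) (hUdense : U ⊆ closure (interior U))
    (f : E → F) (f1 : E × E × K → F)
    (hf : ContinuousOn f U)
    (hcont : ContinuousOn f1 {p : E × E × K | p.1 ∈ U ∧ p.1 + p.2.2 • p.2.1 ∈ U})
    (hdq : ∀ (x y : E) (t : K), t ≠ 0 → x ∈ U → x + t • y ∈ U →
      f1 (x, y, t) = t⁻¹ • (f (x + t • y) - f x))
    (hlin : ∀ x ∈ U, IsLinearMap K fun y : E => f1 (x, y, 0)) :
    ∀ (x y : E) (t s : K), t ≠ 0 → x ∈ U → x + (t * s) • y ∈ U →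
      (x + s • (t • y) ∈ U ∧ t • f1 (x, y, t * s) = f1 (x, t • y, s)) :=
  stmt2_general U f f1 hdq hlin
end

section
/- Let E be a topological vector space over a valued field K and U, V ⊆ E be balanced open 0-neighborhoods with V + V ⊆ U. Then the Minkowski functionals satisfy μ_U(x + y) ≤ max{μ_V(x), μ_V(y)} for all x, y ∈ E. -/
open Pointwise

/-- The Minkowski functional of a subset `U` of a vector space over a valued field `K`. -/
noncomputable def minkowskiGauge (K : Type*) {E : Type*} [NontriviallyNormedField K]
    [AddCommGroup E] [Module K E] (U : Set E) (x : E) : ℝ :=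
  sInf {r : ℝ | ∃ t : K, t ≠ 0 ∧ ‖t‖ = r ∧ x ∈ t • U}

/-!
If `V` is balanced, `t • V` grows with `‖t‖`, so `x ∈ s • V`, `y ∈ t • V` and `‖s‖ ≤ ‖t‖` give
`x + y ∈ t • (V + V) ⊆ t • U`; choosing `s` and `t` with norms close to `μ_V x` and `μ_V y`
yields the bound. Absorbency of `V` keeps these infima away from the junk value `sInf ∅ = 0`.
-/

section MinkowskiGauge

variable {K E : Type*} [NontriviallyNormedField K] [AddCommGroup E] [Module K E]
  {U V : Set E} {x y : E} {s t : K}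

theorem minkowskiGauge_le_of_mem_smul (ht : t ≠ 0) (hx : x ∈ t • U) :
    minkowskiGauge K U x ≤ ‖t‖ :=
  csInf_le ⟨0, fun _ ⟨t', _, hr, _⟩ => hr ▸ norm_nonneg t'⟩ ⟨t, ht, rfl, hx⟩

theorem exists_mem_smul_of_minkowskiGauge_lt (hx : ∃ t : K, t ≠ 0 ∧ x ∈ t • U) {r : ℝ}
    (h : minkowskiGauge K U x < r) : ∃ t : K, t ≠ 0 ∧ ‖t‖ < r ∧ x ∈ t • U := by
  obtain ⟨t, ht, hxt⟩ := hx
  obtain ⟨_, ⟨t', ht', rfl, hxt'⟩, hlt⟩ := exists_lt_of_csInf_lt (by exact ⟨_, t, ht, rfl, hxt⟩) h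
  exact ⟨t', ht', hlt, hxt'⟩

theorem Absorbent.exists_ne_zero_mem_smul (hV : Absorbent K V) (x : E) :
    ∃ t : K, t ≠ 0 ∧ x ∈ t • V := by
  obtain ⟨t, hxt, ht⟩ :=
    ((hV x).eventually.and (Bornology.eventually_ne_cobounded (0 : K))).exists
  exact ⟨t, ht, hxt rfl⟩

theorem Balanced.add_mem_smul_add_of_norm_le (hV : Balanced K V) (hst : ‖s‖ ≤ ‖t‖)
    (hx : x ∈ s • V) (hy : y ∈ t • V) : x + y ∈ t • (V + V) := by
  rw [smul_add]
  exact Set.add_mem_add (hV.smul_mono hst hx) hy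

theorem minkowskiGauge_add_le_max (hV : Balanced K V) (hVabs : Absorbent K V)
    (hVV : V + V ⊆ U) (x y : E) :
    minkowskiGauge K U (x + y) ≤ max (minkowskiGauge K V x) (minkowskiGauge K V y) := by
  refine le_of_forall_gt fun r hr => ?_
  obtain ⟨s, hs, hsr, hxs⟩ := exists_mem_smul_of_minkowskiGauge_lt
    (hVabs.exists_ne_zero_mem_smul x) ((le_max_left _ _).trans_lt hr)
  obtain ⟨t, ht, htr, hyt⟩ := exists_mem_smul_of_minkowskiGauge_lt
    (hVabs.exists_ne_zero_mem_smul y) ((le_max_right _ _).trans_lt hr)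
  rcases le_total ‖s‖ ‖t‖ with hst | hts
  · exact (minkowskiGauge_le_of_mem_smul ht
      (Set.smul_set_mono hVV (hV.add_mem_smul_add_of_norm_le hst hxs hyt))).trans_lt htr
  · rw [add_comm]
    exact (minkowskiGauge_le_of_mem_smul hs
      (Set.smul_set_mono hVV (hV.add_mem_smul_add_of_norm_le hts hyt hxs))).trans_lt hsr

end MinkowskiGauge

theorem stmt5_general {K E : Type*} [NontriviallyNormedField K]
    [AddCommGroup E] [Module K E] [TopologicalSpace E]
    [ContinuousSMul K E]
    (U V : Set E)
    (hVbal : ∀ t : K, ‖t‖ ≤ 1 → t • V ⊆ V) (hVopen : IsOpen V) (hV0 : (0 : E) ∈ V)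
    (hVV : V + V ⊆ U) :
    ∀ x y : E, minkowskiGauge K U (x + y) ≤ max (minkowskiGauge K V x) (minkowskiGauge K V y) :=
  minkowskiGauge_add_le_max hVbal (absorbent_nhds_zero (hVopen.mem_nhds hV0)) hVV

/-- ultrametric-type inequality for Minkowski functionals (Lemma 1.29):
if `V + V ⊆ U` then `μ_U(x+y) ≤ max{μ_V(x), μ_V(y)}`. -/
theorem stmt5 {K E : Type*} [NontriviallyNormedField K]
    [AddCommGroup E] [Module K E] [TopologicalSpace E] [IsTopologicalAddGroup E]
    [ContinuousSMul K E]
    (U V : Set E)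
    (hUbal : ∀ t : K, ‖t‖ ≤ 1 → t • U ⊆ U) (hUopen : IsOpen U) (hU0 : (0 : E) ∈ U)
    (hVbal : ∀ t : K, ‖t‖ ≤ 1 → t • V ⊆ V) (hVopen : IsOpen V) (hV0 : (0 : E) ∈ V)
    (hVV : V + V ⊆ U) :
    ∀ x y : E, minkowskiGauge K U (x + y) ≤ max (minkowskiGauge K V x) (minkowskiGauge K V y) :=
  stmt5_general U V hVbal hVopen hV0 hVV
end

section
/- Let (E, ‖·‖) be an ultrametric Banach space over an ultrametric field K. Then the set Ω := {id − α : α ∈ L(E), ‖α‖ < 1} is an open subgroup of GL(E), and every element of Ω is a surjective linear isometry of E. Consequently the group Iso(E) of surjective linear isometries is an open subgroup of GL(E). -/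
/-!
In an ultrametric normed ring the principal units `{u | ‖1 - u‖ < 1}` form a subgroup, because
`1 - uv = (1 - u) + (1 - v) - (1 - u)(1 - v)` and `1 - u⁻¹ = -(1 - u) + (1 - u⁻¹)(1 - u)`; the
ultrametric inequality bounds both by terms of norm `< 1`. The operator norm of an ultrametric
space is ultrametric, so this applies to `L(E)`. For a principal unit `u` and `‖x‖ > 0`,
`‖(1 - u) x‖ < ‖x‖`, and since all triangles are isosceles, `‖u x‖ = ‖x - (1 - u) x‖ = ‖x‖`.
Hence the open subgroup of principal units lies in the subgroup of isometries, which is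
therefore open as well.
-/

open IsUltrametricDist

instance ContinuousLinearMap.isUltrametricDist {𝕜 𝕜₂ E F : Type*} [NontriviallyNormedField 𝕜]
    [NontriviallyNormedField 𝕜₂] {σ : 𝕜 →+* 𝕜₂} [RingHomIsometric σ]
    [SeminormedAddCommGroup E] [SeminormedAddCommGroup F] [NormedSpace 𝕜 E] [NormedSpace 𝕜₂ F]
    [IsUltrametricDist F] : IsUltrametricDist (E →SL[σ] F) :=
  isUltrametricDist_of_forall_norm_add_le_max_norm fun f g ↦
    (f + g).opNorm_le_bound ((norm_nonneg f).trans (le_max_left _ _)) fun x ↦ calc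
      ‖(f + g) x‖ ≤ max ‖f x‖ ‖g x‖ := norm_add_le_max _ _
      _ ≤ max (‖f‖ * ‖x‖) (‖g‖ * ‖x‖) := max_le_max (f.le_opNorm x) (g.le_opNorm x)
      _ = max ‖f‖ ‖g‖ * ‖x‖ := (max_mul_of_nonneg _ _ (norm_nonneg x)).symm

section PrincipalUnits

variable {R : Type*} [SeminormedRing R] [IsUltrametricDist R]

lemma norm_one_sub_mul_lt_one {a b : R} (ha : ‖1 - a‖ < 1) (hb : ‖1 - b‖ < 1) :
    ‖1 - a * b‖ < 1 := by
  have hsum : ‖(1 - a) + (1 - b)‖ < 1 := (norm_add_le_max _ _).trans_lt (max_lt ha hb)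
  have hprod : ‖(1 - a) * (1 - b)‖ < 1 :=
    (norm_mul_le _ _).trans_lt (mul_lt_one_of_nonneg_of_lt_one_left (norm_nonneg _) ha hb.le)
  calc ‖1 - a * b‖ = ‖((1 - a) + (1 - b)) + -((1 - a) * (1 - b))‖ := by congr 1; noncomm_ring
    _ ≤ max ‖(1 - a) + (1 - b)‖ ‖-((1 - a) * (1 - b))‖ := norm_add_le_max _ _
    _ < 1 := max_lt hsum (by rwa [norm_neg])

lemma Units.norm_one_sub_inv_le {u : Rˣ} (hu : ‖1 - (u : R)‖ < 1) :
    ‖1 - (↑u⁻¹ : R)‖ ≤ ‖1 - (u : R)‖ := by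
  set w : R := 1 - ↑u⁻¹
  have hw : w = -(1 - (u : R)) + w * (1 - u) := by
    simp only [w, sub_mul, mul_sub, one_mul, mul_one, Units.inv_mul]
    abel
  by_contra! hlt
  have hwpos : 0 < ‖w‖ := (norm_nonneg _).trans_lt hlt
  have hsmall : ‖w * (1 - u)‖ < ‖w‖ :=
    (norm_mul_le _ _).trans_lt (mul_lt_of_lt_one_right hwpos hu)
  refine (lt_irrefl ‖w‖) ?_
  calc ‖w‖ ≤ max ‖-(1 - (u : R))‖ ‖w * (1 - u)‖ := (congrArg norm hw).trans_le (norm_add_le_max _ _)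
    _ < ‖w‖ := max_lt (by rwa [norm_neg]) hsmall

variable (R) in
def principalUnits : Subgroup Rˣ where
  carrier := {u | ‖1 - (u : R)‖ < 1}
  one_mem' := by simp
  mul_mem' := norm_one_sub_mul_lt_one
  inv_mem' hu := (Units.norm_one_sub_inv_le hu).trans_lt hu

lemma mem_principalUnits {u : Rˣ} : u ∈ principalUnits R ↔ ‖1 - (u : R)‖ < 1 := Iff.rfl

lemma isOpen_principalUnits : IsOpen (principalUnits R : Set Rˣ) :=
  (isOpen_lt (continuous_const.sub continuous_id).norm continuous_const).preimage
    Units.continuous_val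

end PrincipalUnits

namespace ContinuousLinearMap

variable {K E : Type*} [NontriviallyNormedField K] [SeminormedAddCommGroup E] [NormedSpace K E]

lemma norm_map_of_norm_one_sub_lt_one [IsUltrametricDist E] {u : E →L[K] E}
    (hu : ‖1 - u‖ < 1) (x : E) : ‖u x‖ = ‖x‖ := by
  rcases (norm_nonneg x).eq_or_lt with hx | hx
  · rw [← hx]
    exact le_antisymm ((u.le_opNorm x).trans_eq (by rw [← hx, mul_zero])) (norm_nonneg _)
  have hlt : ‖-((1 - u) x)‖ < ‖x‖ := by
    rw [norm_neg]
    exact ((1 - u).le_opNorm x).trans_lt (mul_lt_of_lt_one_left hx hu)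
  have hux : u x = x + -((1 - u) x) := by simp
  rw [hux, norm_add_eq_max_of_norm_ne_norm hlt.ne', max_eq_left hlt.le]

lemma isometry_of_norm_one_sub_lt_one [IsUltrametricDist E] {u : E →L[K] E}
    (hu : ‖1 - u‖ < 1) : Isometry u :=
  AddMonoidHomClass.isometry_of_norm u (norm_map_of_norm_one_sub_lt_one hu)

variable (K E) in
def isometryUnits : Subgroup (E →L[K] E)ˣ where
  carrier := {u | Isometry (u : E →L[K] E)}
  one_mem' := isometry_id
  mul_mem' hu hv := hu.comp hv
  inv_mem' {u} hu := hu.right_inv fun x ↦ by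
    rw [← mul_apply_eq_comp, Units.mul_inv, one_apply_eq_self]

lemma principalUnits_le_isometryUnits [IsUltrametricDist E] :
    principalUnits (E →L[K] E) ≤ isometryUnits K E :=
  fun _ hu ↦ isometry_of_norm_one_sub_lt_one hu

lemma isOpen_isometryUnits [IsUltrametricDist E] :
    IsOpen (isometryUnits K E : Set (E →L[K] E)ˣ) :=
  Subgroup.isOpen_mono principalUnits_le_isometryUnits isOpen_principalUnits

end ContinuousLinearMap

open ContinuousLinearMap

theorem stmt8_general {K E : Type*} [NontriviallyNormedField K]
    [NormedAddCommGroup E] [NormedSpace K E] [CompleteSpace E] [IsUltrametricDist E] :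
    (∀ α : E →L[K] E, ‖α‖ < 1 →
      (∃ u : (E →L[K] E)ˣ, (u : E →L[K] E) = 1 - α) ∧
      Isometry (fun x : E => (1 - α) x)) ∧
    (∃ G : Subgroup (E →L[K] E)ˣ,
      (G : Set (E →L[K] E)ˣ) =
        {u : (E →L[K] E)ˣ | ∃ α : E →L[K] E, ‖α‖ < 1 ∧ (u : E →L[K] E) = 1 - α} ∧
      IsOpen (G : Set (E →L[K] E)ˣ)) ∧
    (∃ H : Subgroup (E →L[K] E)ˣ,
      (H : Set (E →L[K] E)ˣ) =
        {u : (E →L[K] E)ˣ | Isometry (fun x : E => (u : E →L[K] E) x)} ∧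
      IsOpen (H : Set (E →L[K] E)ˣ)) := by
  refine ⟨fun α hα ↦ ⟨⟨Units.oneSub α hα, rfl⟩, ?_⟩,
    ⟨principalUnits _, ?_, isOpen_principalUnits⟩, ⟨isometryUnits K E, rfl, isOpen_isometryUnits⟩⟩
  · exact isometry_of_norm_one_sub_lt_one (by rwa [sub_sub_cancel])
  · ext u
    refine ⟨fun hu ↦ ⟨1 - u, hu, (sub_sub_cancel _ _).symm⟩, ?_⟩
    rintro ⟨α, hα, hu⟩
    rwa [SetLike.mem_coe, mem_principalUnits, hu, sub_sub_cancel]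

/-- Proposition 1.33, ultrametric case: for an ultrametric Banach space `E`,
`Ω = {id − α : ‖α‖ < 1}` consists of surjective linear isometries, is (the carrier of) an
open subgroup of `GL(E)`, and consequently the surjective linear isometries form an open
subgroup of `GL(E)`. -/
theorem stmt8 {K E : Type*} [NontriviallyNormedField K] [CompleteSpace K]
    [IsUltrametricDist K]
    [NormedAddCommGroup E] [NormedSpace K E] [CompleteSpace E] [IsUltrametricDist E] :
    (∀ α : E →L[K] E, ‖α‖ < 1 →
      (∃ u : (E →L[K] E)ˣ, (u : E →L[K] E) = 1 - α) ∧
      Isometry (fun x : E => (1 - α) x)) ∧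
    (∃ G : Subgroup (E →L[K] E)ˣ,
      (G : Set (E →L[K] E)ˣ) =
        {u : (E →L[K] E)ˣ | ∃ α : E →L[K] E, ‖α‖ < 1 ∧ (u : E →L[K] E) = 1 - α} ∧
      IsOpen (G : Set (E →L[K] E)ˣ)) ∧
    (∃ H : Subgroup (E →L[K] E)ˣ,
      (H : Set (E →L[K] E)ˣ) =
        {u : (E →L[K] E)ˣ | Isometry (fun x : E => (u : E →L[K] E) x)} ∧
      IsOpen (H : Set (E →L[K] E)ˣ)) :=
  stmt8_general
end

section
/- Let (E, ‖·‖) be a Banach space over a valued field K, f : B_r(x) → E, and A ∈ GL(E) with σ := sup{‖f(z) − f(y) − A(z − y)‖/‖z − y‖ : y ≠ z ∈ B_r(x)} < ‖A⁻¹‖⁻¹. Set a := ‖A⁻¹‖⁻¹ − σ and b := ‖A‖ + σ. Then for every y ∈ B_r(x) and every s ∈ (0, r − ‖y − x‖], one has B_{as}(f(y)) ⊆ f(B_s(y)) ⊆ B_{bs}(f(y)). In particular f(B_r(x)) is open in E and f is a homeomorphism onto its image. -/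
open scoped NNReal


/-- Theorem 5.3 (a),(d): quantitative estimates for images of balls under
a map close to an invertible linear map `A`; in particular `f` has open image and is a
homeomorphism onto its image. -/
theorem stmt13 {K E : Type*} [NontriviallyNormedField K] [CompleteSpace K]
    [NormedAddCommGroup E] [NormedSpace K E] [CompleteSpace E]
    (r : ℝ) (hr : 0 < r) (x : E) (f : E → E) (A : (E →L[K] E)ˣ) (σ : ℝ) (hσ0 : 0 ≤ σ)
    (hσ : ∀ y ∈ Metric.ball x r, ∀ z ∈ Metric.ball x r,
      ‖f z - f y - (A : E →L[K] E) (z - y)‖ ≤ σ * ‖z - y‖)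
    (hσlt : σ < ‖((A⁻¹ : (E →L[K] E)ˣ) : E →L[K] E)‖⁻¹) :
    (∀ y ∈ Metric.ball x r, ∀ s : ℝ, 0 < s → s ≤ r - ‖y - x‖ →
      Metric.ball (f y) ((‖((A⁻¹ : (E →L[K] E)ˣ) : E →L[K] E)‖⁻¹ - σ) * s) ⊆
        f '' Metric.ball y s ∧
      f '' Metric.ball y s ⊆ Metric.ball (f y) ((‖(A : E →L[K] E)‖ + σ) * s)) ∧
    IsOpen (f '' Metric.ball x r) ∧
    ∃ h : Metric.ball x r ≃ₜ (f '' Metric.ball x r),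
      ∀ p : Metric.ball x r, (h p : E) = f p := by
  set A' : E →L[K] E := ((A⁻¹ : (E →L[K] E)ˣ) : E →L[K] E) with hA'
  -- ‖A'‖ > 0
  have hA'pos : 0 < ‖A'‖ := by
    rcases (norm_nonneg A').lt_or_eq with h | h
    · exact h
    · exfalso; rw [← h, inv_zero] at hσlt; exact absurd hσlt (not_lt.2 hσ0)
  have hE : Nontrivial E := by
    by_contra h
    have : Subsingleton E := not_nontrivial_iff_subsingleton.mp h
    have : A' = 0 := by ext v; exact Subsingleton.elim _ _
    rw [this, norm_zero] at hA'pos; exact lt_irrefl _ hA'pos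
  have hApos : 0 < ‖(A : E →L[K] E)‖ := by
    rcases (norm_nonneg (A : E →L[K] E)).lt_or_eq with h | h
    · exact h
    · exfalso
      have hA0 : (A : E →L[K] E) = 0 := by
        rw [← norm_eq_zero]; exact h.symm
      have : (1 : E →L[K] E) = 0 := by
        rw [← A.inv_mul]; rw [show (↑A⁻¹ * ↑A : E →L[K] E) = A' ∘L (A : E →L[K] E) from rfl,
          hA0]; simp
      obtain ⟨v, w, hvw⟩ := exists_pair_ne E
      apply hvw
      have hv := congrArg (fun g : E →L[K] E => g v) this
      have hw := congrArg (fun g : E →L[K] E => g w) this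
      simp at hv hw
      rw [hv, hw]
  -- set up ApproximatesLinearOn
  set c : ℝ≥0 := ⟨σ, hσ0⟩ with hc
  set f' : E ≃L[K] E := ContinuousLinearEquiv.ofUnit A with hf'
  have hsymm : (f'.symm : E →L[K] E) = A' := by ext v; rfl
  have hfa : ApproximatesLinearOn f (f' : E →L[K] E) (Metric.ball x r) c := by
    intro z hz y hy
    exact hσ y hy z hz
  have hclt : Subsingleton E ∨ c < ‖(f'.symm : E →L[K] E)‖₊⁻¹ := by
    right
    rw [hsymm, ← NNReal.coe_lt_coe]
    push_cast
    exact hσlt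
  -- the partial homeomorphism
  set e := hfa.toOpenPartialHomeomorph f (Metric.ball x r) hclt Metric.isOpen_ball with he
  refine ⟨?_, ?_, ?_⟩
  · intro y hy s hs0 hs
    have hball : Metric.ball y s ⊆ Metric.ball x r := by
      intro z hz
      rw [Metric.mem_ball] at hz ⊢
      calc dist z x ≤ dist z y + dist y x := dist_triangle z y x
        _ < s + ‖y - x‖ := by rw [dist_eq_norm y x]; linarith
        _ ≤ r := by linarith
    constructor
    · -- lower inclusion
      intro w hw
      rw [Metric.mem_ball, dist_eq_norm] at hw
      have ha : 0 < ‖A'‖⁻¹ - σ := by linarith [hσlt]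
      set t : ℝ := ‖w - f y‖ / (‖A'‖⁻¹ - σ) with ht
      have ht0 : 0 ≤ t := div_nonneg (norm_nonneg _) ha.le
      have hts : t < s := by
        rw [ht, div_lt_iff₀ ha]
        linarith [hw]
      have hcb : Metric.closedBall y t ⊆ Metric.ball x r := by
        intro z hz
        rw [Metric.mem_closedBall] at hz
        rw [Metric.mem_ball]
        calc dist z x ≤ dist z y + dist y x := dist_triangle z y x
          _ ≤ t + ‖y - x‖ := by rw [dist_eq_norm y x]; linarith
          _ < s + ‖y - x‖ := by linarith
          _ ≤ r := by linarith
      have hsurj := hfa.surjOn_closedBall_of_nonlinearRightInverse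
        f'.toNonlinearRightInverse ht0 hcb
      have hnn : ((f'.toNonlinearRightInverse.nnnorm : ℝ))⁻¹ = ‖A'‖⁻¹ := by
        have : (f'.toNonlinearRightInverse.nnnorm : ℝ) = ‖A'‖ := by
          rw [show f'.toNonlinearRightInverse.nnnorm = ‖(f'.symm : E →L[K] E)‖₊ from rfl,
            hsymm, coe_nnnorm]
        rw [this]
      have hwmem : w ∈ Metric.closedBall (f y)
          (((f'.toNonlinearRightInverse.nnnorm : ℝ)⁻¹ - c) * t) := by
        rw [Metric.mem_closedBall, dist_eq_norm, hnn]
        have hcσ : (c : ℝ) = σ := rfl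
        rw [hcσ, ht, mul_div_cancel₀ _ (ne_of_gt ha)]
      have := hsurj hwmem
      obtain ⟨z, hz, hfz⟩ := this
      exact ⟨z, Metric.closedBall_subset_ball hts hz, hfz⟩
    · -- upper inclusion
      rintro _ ⟨z, hz, rfl⟩
      have hz' : z ∈ Metric.ball x r := hball hz
      rw [Metric.mem_ball, dist_eq_norm]
      have h1 : ‖f z - f y - (A : E →L[K] E) (z - y)‖ ≤ σ * ‖z - y‖ := hσ y hy z hz'
      have h2 : ‖(A : E →L[K] E) (z - y)‖ ≤ ‖(A : E →L[K] E)‖ * ‖z - y‖ :=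
        ContinuousLinearMap.le_opNorm _ _
      have h3 : ‖f z - f y‖ ≤ (‖(A : E →L[K] E)‖ + σ) * ‖z - y‖ := by
        calc ‖f z - f y‖ = ‖(f z - f y - (A : E →L[K] E) (z - y)) + (A : E →L[K] E) (z - y)‖ := by
              congr 1; abel
          _ ≤ ‖f z - f y - (A : E →L[K] E) (z - y)‖ + ‖(A : E →L[K] E) (z - y)‖ :=
              norm_add_le _ _
          _ ≤ σ * ‖z - y‖ + ‖(A : E →L[K] E)‖ * ‖z - y‖ := add_le_add h1 h2
          _ = (‖(A : E →L[K] E)‖ + σ) * ‖z - y‖ := by ring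
      have hzy : ‖z - y‖ < s := by rw [← dist_eq_norm]; exact hz
      calc ‖f z - f y‖ ≤ (‖(A : E →L[K] E)‖ + σ) * ‖z - y‖ := h3
        _ < (‖(A : E →L[K] E)‖ + σ) * s := by
            apply mul_lt_mul_of_pos_left hzy; linarith
  · exact e.open_target
  · exact ⟨e.toHomeomorphSourceTarget, fun p => rfl⟩
end

section
/- Let (E, ‖·‖) be an ultrametric Banach space over an ultrametric field K, r > 0, x ∈ E, and f : B_r(x) → E a map. Suppose A ∈ GL(E) with sup{‖f(z) − f(y) − A(z − y)‖/‖z − y‖ : y ≠ z ∈ B_r(x)} < ‖A⁻¹‖⁻¹. Then A⁻¹ ∘ f : B_r(x) → E is an isometry onto an open subset of E; in particular ‖A⁻¹f(z) − A⁻¹f(y)‖ = ‖z − y‖ for all y, z ∈ B_r(x). -/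
/-!
Put `g = A⁻¹ ∘ f`. The hypothesis says that `g` approximates the identity on the ball with
constant `‖A⁻¹‖ σ < 1`, i.e. `‖(g z - g y) - (z - y)‖ < ‖z - y‖` for `y ≠ z`; in an ultrametric
space this forces `‖g z - g y‖ = ‖z - y‖`. Openness of the image is the local surjectivity part of
the inverse function theorem for `f`, which approximates the invertible map `A`, followed by the
homeomorphism `A⁻¹`.
-/

open Metric NNReal

lemma IsUltrametricDist.norm_eq_of_norm_sub_lt {E : Type*} [SeminormedAddCommGroup E]
    [IsUltrametricDist E] {u v : E} (h : ‖u - v‖ < ‖v‖) : ‖u‖ = ‖v‖ := by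
  rw [← sub_add_cancel u v, norm_add_eq_max_of_norm_ne_norm h.ne, max_eq_right h.le]

namespace ApproximatesLinearOn

variable {𝕜 E F G : Type*} [NontriviallyNormedField 𝕜]
  [NormedAddCommGroup E] [NormedSpace 𝕜 E] [NormedAddCommGroup F] [NormedSpace 𝕜 F]
  [NormedAddCommGroup G] [NormedSpace 𝕜 G]

lemma clm_comp {f : E → F} {f' : E →L[𝕜] F} {s : Set E} {c : ℝ≥0}
    (hf : ApproximatesLinearOn f f' s c) (B : F →L[𝕜] G) :
    ApproximatesLinearOn (B ∘ f) (B.comp f') s (‖B‖₊ * c) := by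
  intro z hz y hy
  calc ‖B (f z) - B (f y) - B (f' (z - y))‖ = ‖B (f z - f y - f' (z - y))‖ := by
        simp only [map_sub]
    _ ≤ ‖B‖ * (c * ‖z - y‖) := B.le_of_opNorm_le_of_le le_rfl (hf z hz y hy)
    _ = (‖B‖₊ * c : ℝ≥0) * ‖z - y‖ := by push_cast; ring

lemma norm_sub_eq_of_id [IsUltrametricDist E] {g : E → E} {s : Set E} {c : ℝ≥0}
    (hg : ApproximatesLinearOn g (ContinuousLinearMap.id 𝕜 E) s c) (hc : c < 1)
    {y z : E} (hy : y ∈ s) (hz : z ∈ s) : ‖g z - g y‖ = ‖z - y‖ := by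
  rcases eq_or_ne z y with rfl | hne
  · simp
  refine IsUltrametricDist.norm_eq_of_norm_sub_lt ?_
  calc ‖g z - g y - (z - y)‖ ≤ c * ‖z - y‖ := hg z hz y hy
    _ < 1 * ‖z - y‖ := mul_lt_mul_of_pos_right (mod_cast hc) (norm_pos_iff.2 (sub_ne_zero.2 hne))
    _ = ‖z - y‖ := one_mul _

lemma norm_symm_sub_eq [IsUltrametricDist E] {f : E → F} {e : E ≃L[𝕜] F} {s : Set E}
    {c : ℝ≥0} (hf : ApproximatesLinearOn f (e : E →L[𝕜] F) s c)
    (hc : c < ‖(e.symm : F →L[𝕜] E)‖₊⁻¹) {y z : E} (hy : y ∈ s) (hz : z ∈ s) :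
    ‖e.symm (f z) - e.symm (f y)‖ = ‖z - y‖ := by
  have hg := hf.clm_comp (e.symm : F →L[𝕜] E)
  rw [e.coe_symm_comp_coe] at hg
  refine hg.norm_sub_eq_of_id ?_ hy hz
  rcases eq_or_ne ‖(e.symm : F →L[𝕜] E)‖₊ 0 with h0 | h0
  · simp [h0]
  · rw [mul_comm]
    exact (NNReal.lt_inv_iff_mul_lt h0).1 hc

end ApproximatesLinearOn

theorem stmt14_general {K E : Type*} [NontriviallyNormedField K]
    [NormedAddCommGroup E] [NormedSpace K E] [CompleteSpace E] [IsUltrametricDist E]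
    (r : ℝ) (x : E) (f : E → E) (A : (E →L[K] E)ˣ) (σ : ℝ) (hσ0 : 0 ≤ σ)
    (hσ : ∀ y ∈ Metric.ball x r, ∀ z ∈ Metric.ball x r,
      ‖f z - f y - (A : E →L[K] E) (z - y)‖ ≤ σ * ‖z - y‖)
    (hσlt : σ < ‖((A⁻¹ : (E →L[K] E)ˣ) : E →L[K] E)‖⁻¹) :
    (∀ y ∈ Metric.ball x r, ∀ z ∈ Metric.ball x r,
      ‖((A⁻¹ : (E →L[K] E)ˣ) : E →L[K] E) (f z) -
        ((A⁻¹ : (E →L[K] E)ˣ) : E →L[K] E) (f y)‖ = ‖z - y‖) ∧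
    IsOpen ((fun v : E => ((A⁻¹ : (E →L[K] E)ˣ) : E →L[K] E) (f v)) '' Metric.ball x r) := by
  set e : E ≃L[K] E := ContinuousLinearEquiv.ofUnit A
  have hf : ApproximatesLinearOn f (e : E →L[K] E) (ball x r) σ.toNNReal := fun z hz y hy => by
    rw [Real.coe_toNNReal σ hσ0]
    exact hσ y hy z hz
  have hc : σ.toNNReal < ‖(e.symm : E →L[K] E)‖₊⁻¹ := by
    rw [← NNReal.coe_lt_coe, Real.coe_toNNReal σ hσ0]
    exact hσlt
  refine ⟨fun y hy z hz => hf.norm_symm_sub_eq hc hy hz, ?_⟩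
  have hopen := e.symm.isOpenMap _ (hf.open_image e.toNonlinearRightInverse isOpen_ball (Or.inr hc))
  rwa [Set.image_image] at hopen

/-- Theorem 5.8 (a): in the ultrametric case, `A⁻¹ ∘ f` is an isometry of
the ball onto an open subset of `E`. -/
theorem stmt14 {K E : Type*} [NontriviallyNormedField K] [CompleteSpace K]
    [IsUltrametricDist K]
    [NormedAddCommGroup E] [NormedSpace K E] [CompleteSpace E] [IsUltrametricDist E]
    (r : ℝ) (hr : 0 < r) (x : E) (f : E → E) (A : (E →L[K] E)ˣ) (σ : ℝ) (hσ0 : 0 ≤ σ)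
    (hσ : ∀ y ∈ Metric.ball x r, ∀ z ∈ Metric.ball x r,
      ‖f z - f y - (A : E →L[K] E) (z - y)‖ ≤ σ * ‖z - y‖)
    (hσlt : σ < ‖((A⁻¹ : (E →L[K] E)ˣ) : E →L[K] E)‖⁻¹) :
    (∀ y ∈ Metric.ball x r, ∀ z ∈ Metric.ball x r,
      ‖((A⁻¹ : (E →L[K] E)ˣ) : E →L[K] E) (f z) -
        ((A⁻¹ : (E →L[K] E)ˣ) : E →L[K] E) (f y)‖ = ‖z - y‖) ∧
    IsOpen ((fun v : E => ((A⁻¹ : (E →L[K] E)ˣ) : E →L[K] E) (f v)) '' Metric.ball x r) :=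
  stmt14_general r x f A σ hσ0 hσ hσlt
end

section
/- Let (E, ‖·‖) be an ultrametric Banach space over an ultrametric field K, f : B_r(x) → E with sup{‖f(z) − f(y) − A(z − y)‖/‖z − y‖ : y ≠ z ∈ B_r(x)} < ‖A⁻¹‖⁻¹ for some A ∈ GL(E). Then for every y ∈ B_r(x) and every s ∈ (0, r], the ball B_s(y) is contained in B_r(x) and f(B_s(y)) = f(y) + A · B_s(0) exactly. -/
/-- Theorem 5.8 (d): in the ultrametric case, images of balls are exactly
translated `A`-images of balls: `f(B_s(y)) = f(y) + A·B_s(0)` for `0 < s ≤ r`. -/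
theorem stmt15 {K E : Type*} [NontriviallyNormedField K] [CompleteSpace K]
    [IsUltrametricDist K]
    [NormedAddCommGroup E] [NormedSpace K E] [CompleteSpace E] [IsUltrametricDist E]
    (r : ℝ) (hr : 0 < r) (x : E) (f : E → E) (A : (E →L[K] E)ˣ) (σ : ℝ) (hσ0 : 0 ≤ σ)
    (hσ : ∀ y ∈ Metric.ball x r, ∀ z ∈ Metric.ball x r,
      ‖f z - f y - (A : E →L[K] E) (z - y)‖ ≤ σ * ‖z - y‖)
    (hσlt : σ < ‖((A⁻¹ : (E →L[K] E)ˣ) : E →L[K] E)‖⁻¹) :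
    ∀ y ∈ Metric.ball x r, ∀ s : ℝ, 0 < s → s ≤ r →
      Metric.ball y s ⊆ Metric.ball x r ∧
      f '' Metric.ball y s =
        (fun w : E => f y + (A : E →L[K] E) w) '' Metric.ball (0 : E) s := by
  set B : E →L[K] E := ((A⁻¹ : (E →L[K] E)ˣ) : E →L[K] E) with hB
  have hBpos : 0 < ‖B‖ := by
    rcases (norm_nonneg B).lt_or_eq with h | h
    · exact h
    · exfalso
      rw [← h] at hσlt
      simp only [inv_zero] at hσlt
      exact absurd hσlt (not_lt.mpr hσ0)
  have hk : σ * ‖B‖ < 1 := by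
    have := mul_lt_mul_of_pos_right hσlt hBpos
    rwa [inv_mul_cancel₀ hBpos.ne'] at this
  have hBA : ∀ v : E, B ((A : E →L[K] E) v) = v := fun v => by
    rw [hB, ← ContinuousLinearMap.mul_apply, A.inv_mul, ContinuousLinearMap.one_apply]
  have hAB : ∀ v : E, (A : E →L[K] E) (B v) = v := fun v => by
    rw [hB, ← ContinuousLinearMap.mul_apply, A.mul_inv, ContinuousLinearMap.one_apply]
  intro y hy s hs hsr
  have hsub : Metric.ball y s ⊆ Metric.ball x r := by
    intro z hz
    rw [Metric.mem_ball] at hz hy ⊢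
    calc dist z x ≤ max (dist z y) (dist y x) := IsUltrametricDist.dist_triangle_max z y x
    _ < r := max_lt (lt_of_lt_of_le hz hsr) hy
  refine ⟨hsub, ?_⟩
  have key : ∀ z1 ∈ Metric.ball x r, ∀ z2 ∈ Metric.ball x r,
      ‖B (f z1 - f z2) - (z1 - z2)‖ ≤ σ * ‖B‖ * ‖z1 - z2‖ := by
    intro z1 h1 z2 h2
    have e : B (f z1 - f z2) - (z1 - z2) = B (f z1 - f z2 - (A : E →L[K] E) (z1 - z2)) := by
      simp only [map_sub, hBA]
    rw [e]
    calc ‖B (f z1 - f z2 - (A : E →L[K] E) (z1 - z2))‖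
        ≤ ‖B‖ * ‖f z1 - f z2 - (A : E →L[K] E) (z1 - z2)‖ := B.le_opNorm _
    _ ≤ ‖B‖ * (σ * ‖z1 - z2‖) :=
        mul_le_mul_of_nonneg_left (hσ z2 h2 z1 h1) (norm_nonneg B)
    _ = σ * ‖B‖ * ‖z1 - z2‖ := by ring
  ext u
  constructor
  · rintro ⟨z, hz, rfl⟩
    have himg : f y + (A : E →L[K] E) (B (f z - f y)) = f z := by
      rw [hAB]; abel
    refine ⟨B (f z - f y), ?_, himg⟩
    rw [mem_ball_zero_iff]
    have hzy : ‖z - y‖ < s := by rwa [Metric.mem_ball, dist_eq_norm] at hz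
    have hzx : z ∈ Metric.ball x r := hsub hz
    have h1 : ‖B (f z - f y) - (z - y)‖ ≤ σ * ‖B‖ * ‖z - y‖ := key z hzx y hy
    calc ‖B (f z - f y)‖ = ‖(B (f z - f y) - (z - y)) + (z - y)‖ := by congr 1; abel
    _ ≤ max ‖B (f z - f y) - (z - y)‖ ‖z - y‖ := IsUltrametricDist.norm_add_le_max _ _
    _ ≤ ‖z - y‖ := by
        apply max_le _ (le_refl _)
        calc ‖B (f z - f y) - (z - y)‖ ≤ σ * ‖B‖ * ‖z - y‖ := h1
        _ ≤ 1 * ‖z - y‖ := mul_le_mul_of_nonneg_right hk.le (norm_nonneg _)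
        _ = ‖z - y‖ := one_mul _
    _ < s := hzy
  · rintro ⟨w, hw, rfl⟩
    rw [mem_ball_zero_iff] at hw
    have hclopen : IsClopen (Metric.ball y s) := IsUltrametricDist.isClopen_ball y s
    haveI : CompleteSpace (Metric.ball y s) := hclopen.isClosed.completeSpace_coe
    set g : E → E := fun z => z - B (f z - f y) + w with hg
    have hmaps : ∀ z : E, z ∈ Metric.ball y s → g z ∈ Metric.ball y s := by
      intro z hz
      have hzy : ‖z - y‖ < s := by rwa [Metric.mem_ball, dist_eq_norm] at hz
      have hzx : z ∈ Metric.ball x r := hsub hz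
      have h1 : ‖B (f z - f y) - (z - y)‖ ≤ σ * ‖B‖ * ‖z - y‖ := key z hzx y hy
      rw [Metric.mem_ball, dist_eq_norm]
      have e : g z - y = -(B (f z - f y) - (z - y)) + w := by
        simp only [hg]; abel
      rw [e]
      calc ‖-(B (f z - f y) - (z - y)) + w‖
          ≤ max ‖-(B (f z - f y) - (z - y))‖ ‖w‖ := IsUltrametricDist.norm_add_le_max _ _
      _ = max ‖B (f z - f y) - (z - y)‖ ‖w‖ := by rw [norm_neg]
      _ < s := by
          apply max_lt _ hw
          calc ‖B (f z - f y) - (z - y)‖ ≤ σ * ‖B‖ * ‖z - y‖ := h1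
          _ ≤ 1 * ‖z - y‖ := mul_le_mul_of_nonneg_right hk.le (norm_nonneg _)
          _ = ‖z - y‖ := one_mul _
          _ < s := hzy
    have hcontr : ∀ z1 ∈ Metric.ball y s, ∀ z2 ∈ Metric.ball y s,
        ‖g z1 - g z2‖ ≤ σ * ‖B‖ * ‖z1 - z2‖ := by
      intro z1 h1 z2 h2
      have e : g z1 - g z2 = -(B (f z1 - f z2) - (z1 - z2)) := by
        simp only [hg, map_sub]; abel
      rw [e, norm_neg]
      exact key z1 (hsub h1) z2 (hsub h2)
    set k : NNReal := ⟨σ * ‖B‖, mul_nonneg hσ0 (norm_nonneg B)⟩ with hkdef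
    set G : Metric.ball y s → Metric.ball y s := fun z =>
      ⟨g z.1, hmaps z.1 z.2⟩ with hG
    have hCW : ContractingWith k G := by
      constructor
      · rw [← NNReal.coe_lt_one]; exact hk
      · intro z1 z2
        rw [edist_dist, edist_dist]
        apply ENNReal.ofReal_le_of_le_toReal
        rw [ENNReal.toReal_mul, ENNReal.coe_toReal, ENNReal.toReal_ofReal dist_nonneg]
        have e1 : dist (G z1) (G z2) = ‖g z1.1 - g z2.1‖ := by
          rw [hG, Subtype.dist_eq, dist_eq_norm]
        rw [e1, Subtype.dist_eq, dist_eq_norm]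
        exact hcontr z1.1 z1.2 z2.1 z2.2
    have hne : Nonempty (Metric.ball y s) :=
      ⟨⟨y, by simpa [Metric.mem_ball] using hs⟩⟩
    obtain ⟨z, hzfix, -⟩ := hCW.exists_fixedPoint (Classical.arbitrary _) (edist_ne_top _ _)
    have hgz : g z.1 = z.1 := congrArg Subtype.val hzfix
    refine ⟨z.1, z.2, ?_⟩
    have hBw : B (f z.1 - f y) = w := by
      have h' : z.1 - B (f z.1 - f y) + w = z.1 := hgz
      apply sub_eq_zero.mp
      have e : B (f z.1 - f y) - w = z.1 - (z.1 - B (f z.1 - f y) + w) := by abel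
      rw [e, h', sub_self]
    rw [← hBw]
    show f z.1 = f y + (A : E →L[K] E) (B (f z.1 - f y))
    rw [hAB]; abel
end

section
/- Let P be a topological space, F a Banach space over a valued field K, U ⊆ F open, and f : P × U → F continuous such that the family f_p := f(p,·) is a uniform family of contractions with constant θ ∈ [0,1). Then the set Q of all p ∈ P such that f_p has a fixed point x_p is open in P, and the map φ : Q → F, p ↦ x_p, is continuous. -/
open Metric Filter Topology Function Set
open scoped NNReal

/-!
Where `f_p` has a fixed point `x`, a closed ball `B̄_r(x) ⊆ U` is mapped into itself by every
`f_q` with `‖f_q x - x‖ ≤ (1 - θ) r`, which holds for all `q` near `p`; Banach's fixed point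
theorem on that ball gives openness. Continuity comes from the a posteriori estimate
`‖x_p - x_q‖ ≤ ‖x_p - f_q x_p‖ / (1 - θ)`, whose right side tends to
`‖x_p - f_p x_p‖ / (1 - θ) = 0` as `q → p`.
-/

namespace LipschitzOnWith

variable {X : Type*} [MetricSpace X] {K : ℝ≥0} {g : X → X}

theorem mapsTo_closedBall_of_dist_le {c : X} {r : ℝ} (hg : LipschitzOnWith K g (closedBall c r))
    (hc : dist (g c) c ≤ (1 - K) * r) (hr : 0 ≤ r) :
    MapsTo g (closedBall c r) (closedBall c r) := by
  intro x hx
  have hx' : dist x c ≤ r := hx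
  calc dist (g x) c ≤ dist (g x) (g c) + dist (g c) c := dist_triangle _ _ _
    _ ≤ K * dist x c + (1 - K) * r :=
        add_le_add (hg.dist_le_mul x hx c (mem_closedBall_self hr)) hc
    _ ≤ K * r + (1 - K) * r := by gcongr
    _ = r := by ring

theorem exists_fixedPoint_mem_closedBall [CompleteSpace X] {c : X} {r : ℝ} (hK : K < 1)
    (hg : LipschitzOnWith K g (closedBall c r)) (hc : dist (g c) c ≤ (1 - K) * r) :
    ∃ x ∈ closedBall c r, g x = x := by
  have hK' : (0 : ℝ) < 1 - K := sub_pos.2 (mod_cast hK)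
  have hr : 0 ≤ r := nonneg_of_mul_nonneg_right (dist_nonneg.trans hc) hK'
  have hmaps := hg.mapsTo_closedBall_of_dist_le hc hr
  have hcontr : ContractingWith K (hmaps.restrict g _ _) :=
    ⟨hK, LipschitzWith.of_dist_le_mul fun x y => hg.dist_le_mul x x.2 y y.2⟩
  obtain ⟨x, hx, hfix, -⟩ := hcontr.exists_fixedPoint' isClosed_closedBall.isComplete hmaps
    (mem_closedBall_self hr) (edist_ne_top _ _)
  exact ⟨x, hx, hfix⟩

theorem dist_le_of_isFixedPt {s : Set X} {x y : X} (hg : LipschitzOnWith K g s) (hK : K < 1)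
    (hx : x ∈ s) (hy : y ∈ s) (hfix : IsFixedPt g y) :
    dist x y ≤ dist x (g x) / (1 - K) := by
  have hK' : (0 : ℝ) < 1 - K := sub_pos.2 (mod_cast hK)
  rw [le_div_iff₀ hK']
  have hxy : dist x y ≤ dist x (g x) + K * dist x y :=
    calc dist x y ≤ dist x (g x) + dist (g x) (g y) := by
          rw [hfix.eq]; exact dist_triangle _ _ _
      _ ≤ dist x (g x) + K * dist x y := by gcongr; exact hg.dist_le_mul x hx y hy
  linarith

end LipschitzOnWith

section UniformContraction

variable {P X : Type*} [TopologicalSpace P] [MetricSpace X] {K : ℝ≥0} {U : Set X}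
  {f : P → X → X}

theorem isOpen_setOf_exists_fixedPoint [CompleteSpace X] (hU : IsOpen U) (hK : K < 1)
    (hf : ∀ p, LipschitzOnWith K (f p) U) (hcont : ∀ x ∈ U, Continuous (f · x)) :
    IsOpen {p | ∃ x ∈ U, f p x = x} := by
  rw [isOpen_iff_mem_nhds]
  rintro p ⟨x, hxU, hfix⟩
  obtain ⟨r, hr, hrU⟩ := nhds_basis_closedBall.mem_iff.1 (hU.mem_nhds hxU)
  have hK' : (0 : ℝ) < 1 - K := sub_pos.2 (mod_cast hK)
  have hnear : ∀ᶠ q in 𝓝 p, f q x ∈ ball x ((1 - K) * r) := by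
    have := (hcont x hxU).continuousAt (x := p) |>.eventually_mem
      (ball_mem_nhds _ (mul_pos hK' hr))
    rwa [hfix] at this
  filter_upwards [hnear] with q hq
  obtain ⟨y, hy, hfy⟩ :=
    ((hf q).mono hrU).exists_fixedPoint_mem_closedBall hK (mem_ball.1 hq).le
  exact ⟨y, hrU hy, hfy⟩

theorem continuousOn_of_forall_fixedPoint {S : Set P} {φ : P → X} (hK : K < 1)
    (hf : ∀ p, LipschitzOnWith K (f p) U) (hcont : ∀ x ∈ U, Continuous (f · x))
    (hφ : ∀ p ∈ S, φ p ∈ U ∧ f p (φ p) = φ p) :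
    ContinuousOn φ S := by
  intro p hp
  rw [ContinuousWithinAt, tendsto_iff_dist_tendsto_zero]
  have hbound : ∀ q ∈ S, dist (φ q) (φ p) ≤ dist (φ p) (f q (φ p)) / (1 - K) :=
    fun q hq => dist_comm (φ q) (φ p) ▸
      (hf q).dist_le_of_isFixedPt hK (hφ p hp).1 (hφ q hq).1 (hφ q hq).2
  have hlim : Tendsto (fun q => dist (φ p) (f q (φ p)) / (1 - K)) (𝓝[S] p) (𝓝 0) := by
    have := (tendsto_const_nhds (x := φ p)).dist ((hcont _ (hφ p hp).1).tendsto p)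
    rw [(hφ p hp).2, dist_self] at this
    simpa only [zero_div] using (this.div_const (1 - (K : ℝ))).mono_left nhdsWithin_le_nhds
  exact squeeze_zero' (Eventually.of_forall fun _ => dist_nonneg)
    (eventually_nhdsWithin_of_forall hbound) hlim

end UniformContraction

theorem stmt17_general {F P : Type*}
    [NormedAddCommGroup F] [CompleteSpace F] [TopologicalSpace P]
    (U : Set F) (hU : IsOpen U) (f : P → F → F)
    (θ : ℝ) (hθ0 : 0 ≤ θ) (hθ1 : θ < 1)
    (hcont : ContinuousOn (fun q : P × F => f q.1 q.2) ((Set.univ : Set P) ×ˢ U))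
    (hcontr : ∀ p : P, ∀ x ∈ U, ∀ y ∈ U, ‖f p x - f p y‖ ≤ θ * ‖x - y‖) :
    IsOpen {p : P | ∃ x ∈ U, f p x = x} ∧
    ∃ φ : P → F,
      (∀ p ∈ {p : P | ∃ x ∈ U, f p x = x}, φ p ∈ U ∧ f p (φ p) = φ p) ∧
      ContinuousOn φ {p : P | ∃ x ∈ U, f p x = x} := by
  have hK : (⟨θ, hθ0⟩ : ℝ≥0) < 1 := hθ1
  have hlip : ∀ p, LipschitzOnWith ⟨θ, hθ0⟩ (f p) U := fun p =>
    LipschitzOnWith.of_dist_le_mul fun x hx y hy => by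
      rw [dist_eq_norm, dist_eq_norm]
      exact hcontr p x hx y hy
  have hcont' : ∀ x ∈ U, Continuous (f · x) := fun x hx =>
    continuousOn_univ.1 <| hcont.comp (continuous_id.prodMk continuous_const).continuousOn
      fun _ _ => ⟨trivial, hx⟩
  choose! φ hφ using fun p (hp : p ∈ {p : P | ∃ x ∈ U, f p x = x}) => hp
  exact ⟨isOpen_setOf_exists_fixedPoint hU hK hlip hcont', φ, hφ,
    continuousOn_of_forall_fixedPoint hK hlip hcont' hφ⟩

/-- Proposition 4.5 (a) / Theorem 4.7 (a): for a continuous uniform family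
of contractions `f_p : U → F` on an open subset of a Banach space, the set `Q` of
parameters for which a fixed point exists is open, and the fixed points depend
continuously on the parameter. -/
theorem stmt17 {K F P : Type*} [NontriviallyNormedField K] [CompleteSpace K]
    [NormedAddCommGroup F] [NormedSpace K F] [CompleteSpace F] [TopologicalSpace P]
    (U : Set F) (hU : IsOpen U) (f : P → F → F)
    (θ : ℝ) (hθ0 : 0 ≤ θ) (hθ1 : θ < 1)
    (hcont : ContinuousOn (fun q : P × F => f q.1 q.2) ((Set.univ : Set P) ×ˢ U))
    (hcontr : ∀ p : P, ∀ x ∈ U, ∀ y ∈ U, ‖f p x - f p y‖ ≤ θ * ‖x - y‖) :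
    IsOpen {p : P | ∃ x ∈ U, f p x = x} ∧
    ∃ φ : P → F,
      (∀ p ∈ {p : P | ∃ x ∈ U, f p x = x}, φ p ∈ U ∧ f p (φ p) = φ p) ∧
      ContinuousOn φ {p : P | ∃ x ∈ U, f p x = x} :=
  stmt17_general U hU f θ hθ0 hθ1 hcont hcontr
end

section
/- Let K = Kⁿ-setting over a valued field: E = Kⁿ with the maximum norm, U = U₁ × … × Uₙ ⊆ Kⁿ open, F a topological K-vector space, and f : U → F a C¹-map. Then f is strictly differentiable at every u ∈ U: for every gauge γ on F and ε > 0 there is δ > 0 such that γ(f(z) − f(y) − f'(u)(z − y)) ≤ ε ‖z − y‖_∞ for all y, z ∈ B_δ(u) ∩ U, where f'(u) = df(u,·). -/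
/-!
Along the path from `y` to `z` that changes one coordinate at a time (it stays in `U` because `U`
is a box), the error `f z - f y - f1 (u, z - y, 0)` telescopes into
`∑ⱼ (zⱼ - yⱼ) • (f1 (wⱼ, eⱼ, zⱼ - yⱼ) - f1 (u, eⱼ, 0))`, and by continuity of `f1` every bracket
lies in a prescribed neighbourhood of `0` once `y` and `z` are close to `u`. Dividing the
coefficients by a scalar of norm between `‖z - y‖` and `‖c‖ ‖z - y‖`, where `1 < ‖c‖`, brings them
into the unit ball; on a balanced neighbourhood whose `n`-fold sums have small gauge this yields
`γ (…) ≤ ε ‖z - y‖`.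
-/

open Filter Topology Set

theorem exists_mem_nhds_zero_forall_sum_mem {F : Type*} [AddCommGroup F] [TopologicalSpace F]
    [IsTopologicalAddGroup F] (ι : Type*) [Fintype ι] {V : Set F} (hV : V ∈ 𝓝 0) :
    ∃ W ∈ 𝓝 (0 : F), ∀ v : ι → F, (∀ i, v i ∈ W) → ∑ i, v i ∈ V := by
  have hsum : {v : ι → F | ∑ i, v i ∈ V} ∈ 𝓝 0 :=
    (continuous_finsetSum _ fun i _ => continuous_apply i).continuousAt.preimage_mem_nhds
      (by simpa using hV)
  rw [nhds_pi, Filter.mem_pi'] at hsum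
  obtain ⟨I, t, ht, hsub⟩ := hsum
  exact ⟨⋂ i, t i, iInter_mem.2 ht, fun v hv => hsub fun i _ => mem_iInter.1 (hv i) i⟩

theorem exists_mem_nhds_zero_gauge_sum_smul_le {K F : Type*} [NontriviallyNormedField K]
    [AddCommGroup F] [Module K F] [TopologicalSpace F] [IsTopologicalAddGroup F]
    [ContinuousSMul K F] (ι : Type*) [Fintype ι] {γ : F → ℝ} (hγ_nonneg : ∀ v, 0 ≤ γ v)
    (hγ : ∀ (t : K) (v : F), γ (t • v) = ‖t‖ * γ v) (hγ0 : UpperSemicontinuousAt γ 0)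
    {ε : ℝ} (hε : 0 < ε) :
    ∃ B ∈ 𝓝 (0 : F), ∀ (a : ι → K) (v : ι → F), (∀ i, v i ∈ B) →
      γ (∑ i, a i • v i) ≤ ε * ‖a‖ := by
  obtain ⟨c, hc⟩ := NormedField.exists_one_lt_norm K
  have hγ_zero : γ 0 = 0 := by simpa using hγ 0 0
  obtain ⟨W, hW, hWV⟩ := exists_mem_nhds_zero_forall_sum_mem ι
    (hγ0 (ε / ‖c‖) (by simp only [hγ_zero]; positivity))
  refine ⟨balancedCore K W, balancedCore_mem_nhds_zero hW, fun a v hv => ?_⟩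
  rcases eq_or_ne a 0 with rfl | ha
  · simp [hγ_zero]
  obtain ⟨d, hd, hda, -, hd_inv⟩ := rescale_to_shell hc one_pos ha
  have hsmall : γ (∑ i, (d * a i) • v i) < ε / ‖c‖ := hWV _ fun i =>
    balancedCore_subset W <| (balancedCore_balanced W).smul_mem
      ((norm_le_pi_norm (d • a) i).trans hda.le) (hv i)
  calc γ (∑ i, a i • v i) = ‖d‖⁻¹ * γ (∑ i, (d * a i) • v i) := by
        rw [← norm_inv, ← hγ, Finset.smul_sum]
        simp only [smul_smul, inv_mul_cancel_left₀ hd]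
    _ ≤ (‖c‖ * ‖a‖) * (ε / ‖c‖) := by
        gcongr
        · exact hγ_nonneg _
        · simpa using hd_inv
    _ = ε * ‖a‖ := by
        field_simp [(zero_lt_one.trans hc).ne']

def coordPath {α : Type*} {n : ℕ} (y z : Fin n → α) (j : ℕ) : Fin n → α :=
  fun i => if (i : ℕ) < j then z i else y i

section coordPath

variable {α : Type*} {n : ℕ}

@[simp]
theorem coordPath_zero (y z : Fin n → α) : coordPath y z 0 = y := by
  ext i; simp [coordPath]

theorem coordPath_of_le (y z : Fin n → α) {j : ℕ} (h : n ≤ j) : coordPath y z j = z := by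
  ext i; simp [coordPath, i.isLt.trans_le h]

@[simp]
theorem coordPath_self (u : Fin n → α) (j : ℕ) : coordPath u u j = u := by
  ext i; simp [coordPath]

theorem coordPath_mem_pi {s : Fin n → Set α} {y z : Fin n → α} (hy : y ∈ univ.pi s)
    (hz : z ∈ univ.pi s) (j : ℕ) : coordPath y z j ∈ univ.pi s := fun i _ => by
  unfold coordPath; split_ifs
  exacts [hz i trivial, hy i trivial]

theorem continuous_coordPath [TopologicalSpace α] (j : ℕ) :
    Continuous fun p : (Fin n → α) × (Fin n → α) => coordPath p.1 p.2 j :=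
  continuous_pi fun i => by
    unfold coordPath; split_ifs
    exacts [(continuous_apply i).comp continuous_snd, (continuous_apply i).comp continuous_fst]

theorem coordPath_succ {R : Type*} [Ring R] (y z : Fin n → R) (j : Fin n) :
    coordPath y z (j + 1) = coordPath y z j + (z j - y j) • Pi.single j 1 := by
  ext i
  simp only [coordPath, Pi.add_apply, Pi.smul_apply, Pi.single_apply, Fin.ext_iff, smul_eq_mul]
  split_ifs <;> first | omega | simp_all
  obtain rfl := Fin.ext ‹(i : ℕ) = j›
  abel

theorem sub_eq_sum_coordPath {M : Type*} [AddCommGroup M] (f : (Fin n → α) → M)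
    (y z : Fin n → α) :
    f z - f y = ∑ j : Fin n, (f (coordPath y z (j + 1)) - f (coordPath y z j)) := by
  rw [Fin.sum_univ_eq_sum_range (fun j => f (coordPath y z (j + 1)) - f (coordPath y z j)),
    Finset.sum_range_sub (fun j => f (coordPath y z j)), coordPath_of_le y z le_rfl, coordPath_zero]

end coordPath

theorem IsLinearMap.eq_sum_smul_single {R M ι : Type*} [CommSemiring R] [AddCommMonoid M]
    [Module R M] [Fintype ι] [DecidableEq ι] {g : (ι → R) → M} (hg : IsLinearMap R g)
    (x : ι → R) : g x = ∑ i, x i • g (Pi.single i 1) := by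
  calc g x = IsLinearMap.mk' g hg (∑ i, x i • Pi.single i 1) := by rw [← pi_eq_sum_univ' x]; rfl
    _ = ∑ i, x i • g (Pi.single i 1) := by
      rw [map_sum]
      exact Finset.sum_congr rfl fun i _ => hg.map_smul _ _

section DifferenceQuotient

variable {K F : Type*} [NontriviallyNormedField K] {n : ℕ} {Us : Fin n → Set K}
  {f1 : (Fin n → K) × (Fin n → K) × K → F}

theorem sub_eq_sum_smul_diffQuot [AddCommGroup F] [Module K F] {f : (Fin n → K) → F}
    (hdq : ∀ (x y : Fin n → K) (t : K), t ≠ 0 → x ∈ univ.pi Us → x + t • y ∈ univ.pi Us →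
      f1 (x, y, t) = t⁻¹ • (f (x + t • y) - f x))
    {y z : Fin n → K} (hy : y ∈ univ.pi Us) (hz : z ∈ univ.pi Us) :
    f z - f y = ∑ j, (z j - y j) • f1 (coordPath y z j, Pi.single j 1, z j - y j) := by
  rw [sub_eq_sum_coordPath f y z]
  refine Finset.sum_congr rfl fun j _ => ?_
  rcases eq_or_ne (z j - y j) 0 with h | h
  · rw [coordPath_succ, h, zero_smul, add_zero, sub_self, zero_smul]
  · rw [hdq _ _ _ h (coordPath_mem_pi hy hz j) (coordPath_succ y z j ▸ coordPath_mem_pi hy hz _),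
      smul_inv_smul₀ h, coordPath_succ]

theorem tendsto_diffQuot_coordPath [TopologicalSpace F]
    (hcont : ContinuousOn f1
      {p : (Fin n → K) × (Fin n → K) × K | p.1 ∈ univ.pi Us ∧ p.1 + p.2.2 • p.2.1 ∈ univ.pi Us})
    {u : Fin n → K} (hu : u ∈ univ.pi Us) (j : Fin n) :
    Tendsto (fun p : (Fin n → K) × (Fin n → K) =>
        f1 (coordPath p.1 p.2 j, Pi.single j 1, p.2 j - p.1 j))
      (𝓝[univ.pi Us ×ˢ univ.pi Us] (u, u)) (𝓝 (f1 (u, Pi.single j 1, 0))) := by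
  refine (hcont _ ⟨hu, by simpa using hu⟩).tendsto.comp (tendsto_nhdsWithin_iff.2 ⟨?_, ?_⟩)
  · have hg : Continuous fun p : (Fin n → K) × (Fin n → K) =>
        (coordPath p.1 p.2 j, (Pi.single j 1 : Fin n → K), p.2 j - p.1 j) :=
      (continuous_coordPath _).prodMk (continuous_const.prodMk (by fun_prop))
    simpa using hg.continuousWithinAt.tendsto (s := univ.pi Us ×ˢ univ.pi Us) (x := (u, u))
  · filter_upwards [self_mem_nhdsWithin] with p hp
    exact ⟨coordPath_mem_pi hp.1 hp.2 j, coordPath_succ p.1 p.2 j ▸ coordPath_mem_pi hp.1 hp.2 _⟩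

end DifferenceQuotient

theorem stmt19_general {K F : Type*} [NontriviallyNormedField K]
    [AddCommGroup F] [Module K F] [TopologicalSpace F] [IsTopologicalAddGroup F]
    [ContinuousSMul K F]
    {n : ℕ} (Us : Fin n → Set K)
    (U : Set (Fin n → K)) (hU : U = Set.univ.pi Us)
    (f : (Fin n → K) → F) (f1 : (Fin n → K) × (Fin n → K) × K → F)
    (hcont : ContinuousOn f1
      {p : (Fin n → K) × (Fin n → K) × K | p.1 ∈ U ∧ p.1 + p.2.2 • p.2.1 ∈ U})
    (hdq : ∀ (x y : Fin n → K) (t : K), t ≠ 0 → x ∈ U → x + t • y ∈ U →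
      f1 (x, y, t) = t⁻¹ • (f (x + t • y) - f x))
    (hlin : ∀ x ∈ U, IsLinearMap K fun y : Fin n → K => f1 (x, y, 0)) :
    ∀ u ∈ U, ∀ γ : F → ℝ, (∀ v, 0 ≤ γ v) → (∀ (t : K) (v : F), γ (t • v) = ‖t‖ * γ v) →
      UpperSemicontinuous γ →
      ∀ ε : ℝ, 0 < ε → ∃ δ : ℝ, 0 < δ ∧
        ∀ y ∈ Metric.ball u δ ∩ U, ∀ z ∈ Metric.ball u δ ∩ U,
          γ (f z - f y - f1 (u, z - y, 0)) ≤ ε * ‖z - y‖ := by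
  intro u hu γ hγ_nonneg hγ hγ_usc ε hε
  subst hU
  obtain ⟨B, hB, hγB⟩ :=
    exists_mem_nhds_zero_gauge_sum_smul_le (Fin n) hγ_nonneg hγ (hγ_usc 0) hε
  have hsmall : ∀ᶠ p in 𝓝[univ.pi Us ×ˢ univ.pi Us] (u, u), ∀ j : Fin n,
      f1 (coordPath p.1 p.2 j, Pi.single j 1, p.2 j - p.1 j) - f1 (u, Pi.single j 1, 0) ∈ B :=
    eventually_all.2 fun j =>
      tendsto_sub_nhds_zero_iff.2 (tendsto_diffQuot_coordPath hcont hu j) hB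
  obtain ⟨δ, hδ, hδB⟩ := Metric.mem_nhdsWithin_iff.1 hsmall
  refine ⟨δ, hδ, fun y hy z hz => ?_⟩
  have herr : f z - f y - f1 (u, z - y, 0) = ∑ j, (z - y) j •
      (f1 (coordPath y z j, Pi.single j 1, z j - y j) - f1 (u, Pi.single j 1, 0)) := by
    rw [sub_eq_sum_smul_diffQuot hdq hy.2 hz.2, (hlin u hu).eq_sum_smul_single,
      ← Finset.sum_sub_distrib]
    simp only [Pi.sub_apply, smul_sub]
  rw [herr]
  have hyz : (y, z) ∈ Metric.ball (u, u) δ ∩ univ.pi Us ×ˢ univ.pi Us :=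
    ⟨ball_prod_same u u δ ▸ ⟨hy.1, hz.1⟩, hy.2, hz.2⟩
  exact hγB _ _ (hδB hyz)

/-- Proposition C.1 / Lemma C.2, single parameter: a C¹-map on an open
box `U = U₁ × ⋯ × Uₙ ⊆ Kⁿ` (K a valued field, with the maximum norm on `Kⁿ`) into a
topological vector space `F` is strictly differentiable at each `u ∈ U`: for every gauge
`γ` on `F` and every `ε > 0` there is `δ > 0` with
`γ(f(z) − f(y) − f'(u)(z−y)) ≤ ε‖z−y‖` for all `y, z ∈ B_δ(u) ∩ U`. -/
theorem stmt19 {K F : Type*} [NontriviallyNormedField K]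
    [AddCommGroup F] [Module K F] [TopologicalSpace F] [IsTopologicalAddGroup F]
    [ContinuousSMul K F] [T2Space F]
    {n : ℕ} (Us : Fin n → Set K) (hUo : ∀ i, IsOpen (Us i))
    (U : Set (Fin n → K)) (hU : U = Set.univ.pi Us)
    (f : (Fin n → K) → F) (f1 : (Fin n → K) × (Fin n → K) × K → F)
    (hf : ContinuousOn f U)
    (hcont : ContinuousOn f1
      {p : (Fin n → K) × (Fin n → K) × K | p.1 ∈ U ∧ p.1 + p.2.2 • p.2.1 ∈ U})
    (hdq : ∀ (x y : Fin n → K) (t : K), t ≠ 0 → x ∈ U → x + t • y ∈ U →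
      f1 (x, y, t) = t⁻¹ • (f (x + t • y) - f x))
    (hlin : ∀ x ∈ U, IsLinearMap K fun y : Fin n → K => f1 (x, y, 0)) :
    ∀ u ∈ U, ∀ γ : F → ℝ, (∀ v, 0 ≤ γ v) → (∀ (t : K) (v : F), γ (t • v) = ‖t‖ * γ v) →
      UpperSemicontinuous γ →
      ∀ ε : ℝ, 0 < ε → ∃ δ : ℝ, 0 < δ ∧
        ∀ y ∈ Metric.ball u δ ∩ U, ∀ z ∈ Metric.ball u δ ∩ U,
          γ (f z - f y - f1 (u, z - y, 0)) ≤ ε * ‖z - y‖ :=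
  stmt19_general Us U hU f f1 hcont hdq hlin
end
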